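/- arXiv:2209.04858 — 4 statements merged into one kernel-verified Lean document; each statement's English description precedes it below -/
import Mathlib

section
/- Let j ≥ 1, let 0 ≤ u_0 < u_1 < ⋯ < u_j ≤ 1 be real numbers, and let n_1,…,n_j be positive integers. Then ∫_{u_0<t_1<u_1<t_2<u_2<⋯<t_j<u_j} det((t_b^{n_a})_{1≤a,b≤j}) · (dt_1/t_1)⋯(dt_j/t_j) = (1/(n_1⋯n_j)) · F(u_0,…,u_j ; n_1,…,n_j). -/
/-- `F(t₀,…,t_j ; n₁,…,n_j)`: the determinant of the `(j+1)×(j+1)` matrix whose first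
row is `(1,…,1)` and whose `(a+1)`-st row (`1 ≤ a ≤ j`) is `(t₀^{n_a},…,t_j^{n_a})`
(indices of `t` and `n` starting from `0`). -/
noncomputable def Fdet (j : ℕ) (t : ℕ → ℝ) (n : ℕ → ℕ) : ℝ :=
  Matrix.det (Matrix.of fun a b : Fin (j + 1) =>
    if a.1 = 0 then (1 : ℝ) else t b.1 ^ n (a.1 - 1))

/-! Dividing column `b` by `t_b` turns the integrand into `det (t_b ^ (n_a - 1))`, a determinant
whose `b`-th column depends on `t_b` alone. Over the box `∏ (u_b, u_{b+1})`, multilinearity and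
Fubini make its integral the determinant of the column integrals
`(u_{b+1} ^ n_a - u_b ^ n_a) / n_a`. Pulling `1 / n_a` out of each row leaves the determinant of
successive differences, and subtracting adjacent columns in the matrix of `F`, whose first row is
all ones, shows that this determinant is `F(u₀,…,u_j ; n₁,…,n_j)`. -/

open MeasureTheory Matrix Set

theorem Matrix.det_eq_det_succ_sub_castSucc_of_row_zero {R : Type*} [CommRing R] {j : ℕ}
    (M : Matrix (Fin (j + 1)) (Fin (j + 1)) R) (hM : ∀ b, M 0 b = 1) :
    M.det = (of fun a b : Fin j => M a.succ b.succ - M a.succ b.castSucc).det := by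
  let N : Matrix (Fin (j + 1)) (Fin (j + 1)) R :=
    of fun a b => Fin.cases (M a 0) (fun b => M a b.succ - M a b.castSucc) b
  have hMN : M.det = N.det :=
    det_eq_of_forall_col_eq_smul_add_pred (fun _ => 1) (fun _ => rfl) fun a b => by simp [N]
  rw [hMN, det_succ_row_zero, Fin.sum_univ_succ]
  simp [N, hM, submatrix]

theorem integral_det_pi {ι 𝕜 : Type*} [Fintype ι] [DecidableEq ι] [RCLike 𝕜] {X : ι → Type*}
    [∀ i, MeasurableSpace (X i)] {μ : ∀ i, Measure (X i)} [∀ i, SigmaFinite (μ i)]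
    (f : ι → ∀ b, X b → 𝕜) (hf : ∀ a b, Integrable (f a b) (μ b)) :
    ∫ t, (of fun a b => f a b (t b)).det ∂Measure.pi μ
      = (of fun a b => ∫ x, f a b x ∂μ b).det := by
  simp only [det_apply', of_apply]
  rw [integral_finsetSum _ fun σ _ =>
    (Integrable.fintype_prod_dep fun i => hf (σ i) i).const_mul _]
  refine Finset.sum_congr rfl fun σ _ => ?_
  rw [integral_const_mul, integral_fintype_prod_eq_prod (fun i => f (σ i) i)]

theorem det_pow_mul_prod_inv {ι K : Type*} [Fintype ι] [DecidableEq ι] [Field K]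
    (t : ι → K) (ht : ∀ b, t b ≠ 0) (m : ι → ℕ) (hm : ∀ a, 0 < m a) :
    (of fun a b => t b ^ m a).det * ∏ b, (t b)⁻¹ = (of fun a b => t b ^ (m a - 1)).det := by
  rw [mul_comm, ← det_mul_row]
  congr 1
  ext a b
  simp [pow_sub₀ _ (ht b) (hm a), mul_comm]

theorem integral_Ioo_pow_sub_one {a b : ℝ} (hab : a ≤ b) {m : ℕ} (hm : 0 < m) :
    ∫ x in Ioo a b, x ^ (m - 1) = (m : ℝ)⁻¹ * (b ^ m - a ^ m) := by
  obtain ⟨k, rfl⟩ : ∃ k, m = k + 1 := ⟨m - 1, by omega⟩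
  rw [← integral_Ioc_eq_integral_Ioo, ← intervalIntegral.integral_of_le hab, integral_pow]
  push_cast
  simp [div_eq_inv_mul]

theorem Fdet_eq_det_pow_sub_pow (j : ℕ) (u : ℕ → ℝ) (n : ℕ → ℕ) :
    Fdet j u n = (of fun a b : Fin j => u (b + 1) ^ n a - u b ^ n a).det := by
  rw [Fdet, det_eq_det_succ_sub_castSucc_of_row_zero _ fun b => by simp]
  simp

theorem lemma1_I_general (j : ℕ) (u : ℕ → ℝ) (n : ℕ → ℕ)
    (hum : ∀ i < j, u i < u (i + 1))
    (hn : ∀ i < j, 0 < n i) :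
    (∫ t : Fin j → ℝ in {t | ∀ i : Fin j, u i.1 < t i ∧ t i < u (i.1 + 1)},
        Matrix.det (Matrix.of fun a b : Fin j => t b ^ n a.1) * ∏ i, (t i)⁻¹)
      = (∏ i ∈ Finset.range j, (n i : ℝ))⁻¹ * Fdet j u n := by
  let s : Fin j → Set ℝ := fun i => Ioo (u i) (u (i + 1))
  have hbox : {t : Fin j → ℝ | ∀ i : Fin j, u i.1 < t i ∧ t i < u (i.1 + 1)} = univ.pi s := by
    ext t
    simp [s]
  have hne : ∀ᵐ t ∂Measure.pi (fun i => volume.restrict (s i)), ∀ i, t i ≠ 0 :=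
    ae_all_iff.2 fun i => Measure.tendsto_eval_ae_ae.eventually (Measure.ae_ne _ 0)
  have hcol (a b : Fin j) : ∫ x in s b, x ^ (n a - 1)
      = (n a : ℝ)⁻¹ * (u (b + 1) ^ n a - u b ^ n a) :=
    integral_Ioo_pow_sub_one (hum b b.2).le (hn a a.2)
  have hint (a b : Fin j) : IntegrableOn (fun x : ℝ => x ^ (n a - 1)) (s b) :=
    (continuous_pow _).integrableOn_Icc.mono_set Ioo_subset_Icc_self
  rw [hbox, volume_pi, Measure.restrict_pi_pi,
    integral_congr_ae (hne.mono fun t ht => det_pow_mul_prod_inv t ht _ fun a => hn a a.2),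
    integral_det_pi _ hint]
  simp only [hcol]
  rw [Fdet_eq_det_pow_sub_pow, ← Fin.prod_univ_eq_prod_range, ← Finset.prod_inv_distrib,
    ← det_mul_column]
  rfl

/-- **Lemma 1 (I).** For `0 ≤ u₀ < u₁ < ⋯ < u_j ≤ 1` and positive integers `n₁,…,n_j`,
`∫_{u₀<t₁<u₁<⋯<t_j<u_j} det((t_b^{n_a})_{a,b}) dt₁/t₁ ⋯ dt_j/t_j
  = (n₁⋯n_j)⁻¹ · F(u₀,…,u_j ; n₁,…,n_j)`. -/
theorem lemma1_I (j : ℕ) (hj : 1 ≤ j) (u : ℕ → ℝ) (n : ℕ → ℕ)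
    (hu0 : 0 ≤ u 0) (hum : ∀ i < j, u i < u (i + 1)) (huj : u j ≤ 1)
    (hn : ∀ i < j, 0 < n i) :
    (∫ t : Fin j → ℝ in {t | ∀ i : Fin j, u i.1 < t i ∧ t i < u (i.1 + 1)},
        Matrix.det (Matrix.of fun a b : Fin j => t b ^ n a.1) * ∏ i, (t i)⁻¹)
      = (∏ i ∈ Finset.range j, (n i : ℝ))⁻¹ * Fdet j u n :=
  lemma1_I_general j u n hum hn
end

section
/- Let j ≥ 1, let 0 ≤ u_0 < u_1 < ⋯ < u_j < 1 be real numbers, and let n_1,…,n_{j+1} be integers with 0 ≤ n_1 < n_2 < ⋯ < n_{j+1}. Then ∫_{u_0<t_1<u_1<t_2<u_2<⋯<t_j<u_j} det(M) · (dt_1/(1−t_1))⋯(dt_j/(1−t_j)) = Σ_{n_1<m_1≤n_2<m_2≤⋯<m_j≤n_{j+1}} (1/(m_1⋯m_j)) · F(u_0,…,u_j ; m_1,…,m_j), where M is the (j+1)×(j+1) matrix whose a-th row (1≤a≤j+1) is (t_1^{n_a}, t_2^{n_a}, …, t_j^{n_a}, 1), and the finite sum is over integer tuples (m_1,…,m_j)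 satisfying n_1<m_1≤n_2<m_2≤n_3<⋯≤n_j<m_j≤n_{j+1}. -/
/-!
Subtracting consecutive rows of `M` clears its last column except for one entry, and dividing
column `b` by `1 - t_b` turns `t_b^{n_{a+1}} - t_b^{n_a}` into minus a geometric sum. So the
integrand is `det (∑_{n_a ≤ m < n_{a+1}} t_b^m)`, whose `b`-th column depends on `t_b` alone;
integrating over the box integrates each column separately and yields
`det (∑_{n_a < m ≤ n_{a+1}} (u_{b+1}^m - u_b^m) / m)`. Expanding this determinant
multilinearly in its rows gives the sum over `(m_1,…,m_j)`, and subtracting consecutive columns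
of the matrix defining `F(u_0,…,u_j ; m)` identifies it with `det (u_{b+1}^{m_a} - u_b^{m_a})`.
-/

open MeasureTheory Finset

namespace Matrix

variable {R : Type*} [CommRing R]

theorem det_of_last_col_eq_one {j : ℕ} (x : Fin (j + 1) → Fin j → R) :
    (of fun a b : Fin (j + 1) => if h : b.1 < j then x a ⟨b.1, h⟩ else 1).det
      = (-1) ^ j * (of fun a b : Fin j => x a.succ b - x a.castSucc b).det := by
  set B : Matrix (Fin (j + 1)) (Fin (j + 1)) R := of fun a b =>
    Fin.cases (if h : b.1 < j then x 0 ⟨b.1, h⟩ else 1)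
      (fun a => if h : b.1 < j then x a.succ ⟨b.1, h⟩ - x a.castSucc ⟨b.1, h⟩ else 0) a
  have hrow : (of fun a b : Fin (j + 1) => if h : b.1 < j then x a ⟨b.1, h⟩ else 1).det
      = B.det :=
    det_eq_of_forall_row_eq_smul_add_pred (fun _ => 1) (fun _ => rfl) fun a b => by
      by_cases h : b.1 < j <;> simp [B, h]
  have hminor : B.submatrix Fin.succ Fin.castSucc = of fun a b => x a.succ b - x a.castSucc b := by
    ext a b
    simp [B]
  rw [hrow, det_succ_column B (Fin.last j), Fin.sum_univ_succ, Finset.sum_eq_zero, add_zero]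
  · simp [Fin.succAbove_last, hminor, B]
  · intro a _
    simp [B]

theorem det_of_sum_mul {ι κ : Type*} [Fintype ι] [DecidableEq ι] (s : ι → Finset κ)
    (c : κ → R) (w : κ → ι → R) :
    (of fun a b => ∑ k ∈ s a, c k * w k b).det
      = ∑ r ∈ Fintype.piFinset s, (∏ a, c (r a)) * (of fun a b => w (r a) b).det := by
  have hexpand := (detRowAlternating (R := R) (n := ι)).toMultilinearMap.map_sum_finset
    (fun a k => c k • w k) s
  simp only [AlternatingMap.coe_multilinearMap, MultilinearMap.map_smul_univ] at hexpand
  have hrows : (of fun a b => ∑ k ∈ s a, c k * w k b) = fun a => ∑ k ∈ s a, c k • w k := by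
    ext a b
    simp [Finset.sum_apply]
  rw [hrows]
  exact hexpand

end Matrix

theorem Fdet_eq_det_sub (j : ℕ) (u : ℕ → ℝ) (m : ℕ → ℕ) :
    Fdet j u m = (Matrix.of fun a b : Fin j => u (b.1 + 1) ^ m a.1 - u b.1 ^ m a.1).det := by
  set A : Matrix (Fin (j + 1)) (Fin (j + 1)) ℝ :=
    Matrix.of fun a b => if a.1 = 0 then 1 else u b.1 ^ m (a.1 - 1)
  set B : Matrix (Fin (j + 1)) (Fin (j + 1)) ℝ :=
    Matrix.of fun a b => Fin.cases (A a 0) (fun b => A a b.succ - A a b.castSucc) b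
  have hcol : A.det = B.det :=
    Matrix.det_eq_of_forall_col_eq_smul_add_pred (fun _ => 1) (fun _ => rfl) fun a b => by
      simp [B]
  have hminor : B.submatrix Fin.succ Fin.succ
      = Matrix.of fun a b : Fin j => u (b.1 + 1) ^ m a.1 - u b.1 ^ m a.1 := by
    ext a b
    simp [A, B]
  rw [Fdet, hcol, Matrix.det_succ_row_zero, Fin.sum_univ_succ, Finset.sum_eq_zero, add_zero]
  · rw [Fin.succAbove_zero, hminor]
    simp [A, B]
  · intro b _
    simp [A, B]

theorem tsum_subtype_Ioc_eq_sum_piFinset {M : Type*} [AddCommMonoid M] [TopologicalSpace M]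
    (j : ℕ) (lo hi : ℕ → ℕ) (f : (ℕ → ℕ) → M) :
    ∑' m : {m : ℕ → ℕ // (∀ i < j, lo i < m i ∧ m i ≤ hi i) ∧ ∀ i, j ≤ i → m i = 0}, f m.1
      = ∑ r ∈ Fintype.piFinset (fun a : Fin j => Ioc (lo a) (hi a)),
          f (fun i => if h : i < j then r ⟨i, h⟩ else 0) := by
  let e : Fintype.piFinset (fun a : Fin j => Ioc (lo a) (hi a)) ≃
      {m : ℕ → ℕ // (∀ i < j, lo i < m i ∧ m i ≤ hi i) ∧ ∀ i, j ≤ i → m i = 0} :=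
    { toFun := fun r => ⟨fun i => if h : i < j then r.1 ⟨i, h⟩ else 0, fun i hi => by
          simpa [hi] using Fintype.mem_piFinset.mp r.2 ⟨i, hi⟩,
        fun i hi => dif_neg (by omega)⟩
      invFun := fun m => ⟨fun a => m.1 a, Fintype.mem_piFinset.mpr fun a => by
          simpa using m.2.1 a a.2⟩
      left_inv := fun r => by ext a; simp
      right_inv := fun m => by
        ext i
        by_cases hi : i < j
        · simp [hi]
        · simp [hi, m.2.2 i (by omega)] }
  rw [← e.tsum_eq, ← Finset.tsum_subtype]
  rfl

theorem tsum_inv_prod_mul_Fdet (j : ℕ) (u : ℕ → ℝ) (n : ℕ → ℕ) :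
    ∑' m : {m : ℕ → ℕ // (∀ i < j, n i < m i ∧ m i ≤ n (i + 1)) ∧ ∀ i, j ≤ i → m i = 0},
        (∏ i ∈ range j, (m.1 i : ℝ))⁻¹ * Fdet j u m.1
      = (Matrix.of fun a b : Fin j => ∑ m ∈ Ioc (n a.1) (n (a.1 + 1)),
          (m : ℝ)⁻¹ * (u (b.1 + 1) ^ m - u b.1 ^ m)).det := by
  rw [Matrix.det_of_sum_mul (fun a : Fin j => Ioc (n a.1) (n (a.1 + 1))) (fun m : ℕ => (m : ℝ)⁻¹)
      fun m b => u (b.1 + 1) ^ m - u b.1 ^ m,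
    tsum_subtype_Ioc_eq_sum_piFinset j n (fun i => n (i + 1))
      fun m => (∏ i ∈ range j, (m i : ℝ))⁻¹ * Fdet j u m]
  refine Finset.sum_congr rfl fun r _ => ?_
  rw [Fdet_eq_det_sub, ← Fin.prod_univ_eq_prod_range, Finset.prod_inv_distrib]
  simp

theorem integral_det_apply_pi {𝕜 ι : Type*} [RCLike 𝕜] [Fintype ι] [DecidableEq ι]
    {E : ι → Type*} [∀ i, MeasurableSpace (E i)] (μ : ∀ i, Measure (E i))
    [∀ i, SigmaFinite (μ i)] (f : ι → ∀ i, E i → 𝕜) (hf : ∀ a b, Integrable (f a b) (μ b)) :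
    ∫ t, (Matrix.of fun a b => f a b (t b)).det ∂Measure.pi μ
      = (Matrix.of fun a b => ∫ x, f a b x ∂μ b).det := by
  simp only [Matrix.det_apply', Matrix.of_apply]
  rw [integral_finsetSum _ fun σ _ => (Integrable.fintype_prod_dep fun b => hf (σ b) b).const_mul _]
  refine Finset.sum_congr rfl fun σ _ => ?_
  rw [integral_const_mul, integral_fintype_prod_eq_prod (fun b x => f (σ b) b x)]

theorem integral_Ioo_geom_sum {x y : ℝ} (hxy : x ≤ y) (p q : ℕ) :
    ∫ t in Set.Ioo x y, ∑ m ∈ Ico p q, t ^ m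
      = ∑ m ∈ Ioc p q, (m : ℝ)⁻¹ * (y ^ m - x ^ m) := by
  rw [integral_finsetSum _ fun m _ => (continuous_pow m).integrableOn_Icc.mono_set
    Set.Ioo_subset_Icc_self, ← Finset.Ico_add_one_add_one_eq_Ioc, ← Finset.sum_Ico_add']
  refine Finset.sum_congr rfl fun m _ => ?_
  rw [← integral_Ioc_eq_integral_Ioo, ← intervalIntegral.integral_of_le hxy, integral_pow]
  push_cast
  ring

theorem det_pow_mul_prod_inv_one_sub {K : Type*} [Field K] {j : ℕ} (n : ℕ → ℕ)
    (hn : ∀ i < j, n i ≤ n (i + 1)) (t : Fin j → K) (ht : ∀ i, t i ≠ 1) :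
    (Matrix.of fun a b : Fin (j + 1) => if h : b.1 < j then t ⟨b.1, h⟩ ^ n a.1 else 1).det
        * ∏ i, (1 - t i)⁻¹
      = (Matrix.of fun a b : Fin j => ∑ m ∈ Ico (n a.1) (n (a.1 + 1)), t b ^ m).det := by
  have hgeom : ∀ a b : Fin j, ∑ m ∈ Ico (n a.1) (n (a.1 + 1)), t b ^ m
      = -(1 - t b)⁻¹ * (t b ^ n (a.1 + 1) - t b ^ n a) := fun a b => by
    rw [geom_sum_Ico' (ht b) (hn a a.2), div_eq_inv_mul]
    ring
  have hrows := Matrix.det_of_last_col_eq_one fun (a : Fin (j + 1)) (b : Fin j) => t b ^ n a.1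
  have hcols := Matrix.det_mul_row (fun b => -(1 - t b)⁻¹)
    (Matrix.of fun a b : Fin j => t b ^ n (a.1 + 1) - t b ^ n a.1)
  simp only [Fin.val_succ, Fin.val_castSucc] at hrows
  simp only [Matrix.of_apply] at hcols
  simp_rw [hgeom]
  rw [hcols, hrows, Finset.prod_neg, Finset.card_univ, Fintype.card_fin]
  ring

theorem setIntegral_det_pow_mul_prod_inv_one_sub {j : ℕ} {u : ℕ → ℝ} {n : ℕ → ℕ}
    (hu : ∀ i < j, u i ≤ u (i + 1)) (huj : u j < 1) (hn : ∀ i < j, n i ≤ n (i + 1)) :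
    ∫ t : Fin j → ℝ in {t | ∀ i : Fin j, u i.1 < t i ∧ t i < u (i.1 + 1)},
        (Matrix.of fun a b : Fin (j + 1) =>
          if h : b.1 < j then t ⟨b.1, h⟩ ^ n a.1 else 1).det * ∏ i, (1 - t i)⁻¹
      = (Matrix.of fun a b : Fin j => ∑ m ∈ Ioc (n a.1) (n (a.1 + 1)),
          (m : ℝ)⁻¹ * (u (b.1 + 1) ^ m - u b.1 ^ m)).det := by
  have hu_lt_one : ∀ i ≤ j, u i < 1 := fun i hi => by
    induction hi using Nat.decreasingInduction with
    | self => exact huj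
    | of_succ k hk ih => exact (hu k hk).trans_lt ih
  have hbox : {t : Fin j → ℝ | ∀ i : Fin j, u i.1 < t i ∧ t i < u (i.1 + 1)}
      = Set.univ.pi fun i : Fin j => Set.Ioo (u i.1) (u (i.1 + 1)) := by
    ext t
    simp [Set.mem_pi]
  rw [hbox, setIntegral_congr_fun (MeasurableSet.univ_pi fun _ => measurableSet_Ioo)
      fun t ht => det_pow_mul_prod_inv_one_sub n hn t fun i =>
        ((ht i trivial).2.trans (hu_lt_one _ i.2)).ne,
    volume_pi, Measure.restrict_pi_pi,
    integral_det_apply_pi (fun b : Fin j => volume.restrict (Set.Ioo (u b.1) (u (b.1 + 1))))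
      (fun a b x => ∑ m ∈ Ico (n a.1) (n (a.1 + 1)), x ^ m) fun a b =>
        (continuous_finsetSum _ fun m _ => continuous_pow m).integrableOn_Icc.mono_set
          Set.Ioo_subset_Icc_self]
  congr 1
  ext a b
  exact integral_Ioo_geom_sum (hu b b.2) _ _

theorem lemma1_III_general (j : ℕ) (u : ℕ → ℝ) (n : ℕ → ℕ)
    (hum : ∀ i < j, u i < u (i + 1)) (huj : u j < 1)
    (hn : ∀ i < j, n i < n (i + 1)) :
    (∫ t : Fin j → ℝ in {t | ∀ i : Fin j, u i.1 < t i ∧ t i < u (i.1 + 1)},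
        Matrix.det (Matrix.of fun a b : Fin (j + 1) =>
          if h : b.1 < j then t ⟨b.1, h⟩ ^ n a.1 else 1) * ∏ i, (1 - t i)⁻¹)
      = ∑' m : {m : ℕ → ℕ // (∀ i < j, n i < m i ∧ m i ≤ n (i + 1)) ∧
            ∀ i, j ≤ i → m i = 0},
          (∏ i ∈ Finset.range j, (m.1 i : ℝ))⁻¹ * Fdet j u m.1 := by
  rw [setIntegral_det_pow_mul_prod_inv_one_sub (fun i hi => (hum i hi).le) huj
      fun i hi => (hn i hi).le, tsum_inv_prod_mul_Fdet]

/-- **Lemma 1 (III).** For `0 ≤ u₀ < ⋯ < u_j < 1` and integers `0 ≤ n₁ < ⋯ < n_{j+1}`,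
`∫_{u₀<t₁<⋯<t_j<u_j} det(M) dt₁/(1-t₁) ⋯ dt_j/(1-t_j)
  = Σ_{n₁<m₁≤n₂<⋯<m_j≤n_{j+1}} (m₁⋯m_j)⁻¹ · F(u₀,…,u_j ; m₁,…,m_j)`,
where the `a`-th row of the `(j+1)×(j+1)` matrix `M` is `(t₁^{n_a},…,t_j^{n_a},1)`
(the summation tuples are normalized by `m i = 0` for `i ≥ j`). -/
theorem lemma1_III (j : ℕ) (hj : 1 ≤ j) (u : ℕ → ℝ) (n : ℕ → ℕ)
    (hu0 : 0 ≤ u 0) (hum : ∀ i < j, u i < u (i + 1)) (huj : u j < 1)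
    (hn : ∀ i < j, n i < n (i + 1)) :
    (∫ t : Fin j → ℝ in {t | ∀ i : Fin j, u i.1 < t i ∧ t i < u (i.1 + 1)},
        Matrix.det (Matrix.of fun a b : Fin (j + 1) =>
          if h : b.1 < j then t ⟨b.1, h⟩ ^ n a.1 else 1) * ∏ i, (1 - t i)⁻¹)
      = ∑' m : {m : ℕ → ℕ // (∀ i < j, n i < m i ∧ m i ≤ n (i + 1)) ∧
            ∀ i, j ≤ i → m i = 0},
          (∏ i ∈ Finset.range j, (m.1 i : ℝ))⁻¹ * Fdet j u m.1 :=
  lemma1_III_general j u n hum huj hn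
end

section
/- The following identity of convergent sums over positive integers holds: Σ_{a ≤ b ≤ c} 1/(a·b·c²) = Σ_{a < c, b ≤ c} 1/(a·b·c²), where on the left the sum is over all triples (a,b,c) of positive integers with a ≤ b ≤ c, and on the right over all triples (a,b,c) of positive integers with a < c and b ≤ c. -/
/-!
Write `ζ(s₁, …, s_r) = ∑_{0 < n₁ < ⋯ < n_r} n₁^{-s₁} ⋯ n_r^{-s_r}`. Splitting each weak inequality
into `<` and `=`, and the right-hand side also according to `a < b` or `b ≤ a`, the left-hand side
is `ζ(4) + ζ(2,2) + ζ(1,3) + ζ(1,1,2)` and the right-hand side is `ζ(1,3) + ζ(2,2) + 2 ζ(1,1,2)`,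
so the identity is Euler's `ζ(1,1,2) = ζ(4)`.

That follows by evaluating two Mordell–Tornheim sums in two ways (in `ℝ≥0∞`, where rearranging
is free). Partial fractions `1/(ab) = (1/a + 1/b)/(a+b)`, and their three-variable analogue, give
`∑ 1/(ab(a+b)²) = 2 ζ(1,3)` and `∑ 1/(abc(a+b+c)) = 6 ζ(1,1,2)`. Summing out one variable first
with the telescoping series `∑_{c ≥ 1} 1/(c(c+t)) = H_t/t` gives instead
`∑ 1/(ab(a+b)²) + ζ(2,2) = ∑ 1/(ab²(a+b)) = ζ(1,3) + ζ(4)` and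
`∑ 1/(abc(a+b+c)) = 2 ∑_{a<c} H_c/(ac²) = 4 ζ(1,1,2) + 2 ζ(2,2) + 2 ζ(1,3)`.
Cancelling the finite values `ζ(1,3)` and `ζ(1,1,2)` yields `ζ(1,1,2) = ζ(2,2) + ζ(1,3) = ζ(4)`.
-/

open Finset Filter Topology ENNReal

theorem hasSum_sub_succ_of_antitone {f : ℕ → ℝ} (hf : Antitone f)
    (hlim : Tendsto f atTop (𝓝 0)) : HasSum (fun n ↦ f n - f (n + 1)) (f 0) := by
  rw [hasSum_iff_tendsto_nat_of_nonneg (fun n ↦ sub_nonneg.2 (hf n.le_succ))]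
  simp_rw [sum_range_sub']
  simpa using tendsto_const_nhds.sub hlim

theorem hasSum_harmonic_telescope (t : ℕ) :
    HasSum (fun m : ℕ ↦ (t : ℝ) / ((m + 1) * (m + t + 1))) (harmonic t) := by
  set u : ℕ → ℝ := fun i ↦ ((i : ℝ) + 1)⁻¹
  set f : ℕ → ℝ := fun m ↦ ∑ j ∈ range t, u (m + j)
  have hu : Antitone u := fun i i' h ↦ inv_anti₀ (by positivity) (by gcongr)
  have hf : Antitone f := fun m m' h ↦ sum_le_sum fun j _ ↦ hu (by omega)
  have hulim : Tendsto u atTop (𝓝 0) :=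
    tendsto_inv_atTop_zero.comp (tendsto_atTop_add_const_right _ _ tendsto_natCast_atTop_atTop)
  have hlim : Tendsto f atTop (𝓝 0) := by
    simpa using tendsto_finsetSum (range t) fun j _ ↦ hulim.comp (tendsto_add_atTop_nat j)
  have hdiff (m : ℕ) : f m - f (m + 1) = t / ((m + 1) * (m + t + 1)) := by
    have htel := sum_range_sub' (fun j ↦ u (m + j)) t
    simp only [← add_assoc] at htel
    simp only [f, ← sum_sub_distrib, add_right_comm m 1, htel, u, add_zero]
    push_cast
    field_simp
    ring
  have h0 : f 0 = harmonic t := by simp [f, u, harmonic]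
  simpa only [hdiff, h0] using hasSum_sub_succ_of_antitone hf hlim

namespace ENNReal

theorem tsum_ofReal_inv_mul_telescope {c : ℝ} (hc : 0 ≤ c) (t : ℕ) :
    ∑' m : ℕ, ENNReal.ofReal ((c * (m + 1) * (m + t + 2))⁻¹) =
      ∑ j ∈ range (t + 1), ENNReal.ofReal ((c * (t + 1) * (j + 1))⁻¹) := by
  have h := (hasSum_harmonic_telescope (t + 1)).mul_left (c * (t + 1))⁻¹
  have hterm : (fun m : ℕ ↦ (c * (t + 1))⁻¹ * ((t + 1 : ℕ) / ((m + 1) * (m + (t + 1 : ℕ) + 1)))) =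
      fun m : ℕ ↦ (c * (m + 1) * (m + t + 2))⁻¹ := by
    ext m
    push_cast
    field_simp
    ring
  simp only [hterm, harmonic, Rat.cast_sum, mul_sum] at h
  push_cast [← mul_inv] at h
  rw [← ENNReal.ofReal_sum_of_nonneg fun j _ ↦ by positivity, ← h.tsum_eq,
    ENNReal.ofReal_tsum_of_nonneg (fun m ↦ by positivity) h.summable]

theorem tsum_ofReal_inv_sq_le (N : ℕ) :
    ∑' k : ℕ, ENNReal.ofReal ((N + k + 2 : ℝ) ^ 2)⁻¹ ≤ ENNReal.ofReal (N + 1 : ℝ)⁻¹ := by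
  set f : ℕ → ℝ := fun k ↦ (N + k + 1 : ℝ)⁻¹
  have hf : Antitone f := fun k k' h ↦ inv_anti₀ (by positivity) (by gcongr)
  have hlim : Tendsto f atTop (𝓝 0) :=
    tendsto_inv_atTop_zero.comp (tendsto_atTop_add_const_right _ _
      (tendsto_atTop_add_const_left _ _ tendsto_natCast_atTop_atTop))
  have h := hasSum_sub_succ_of_antitone hf hlim
  have hle (k : ℕ) : ((N + k + 2 : ℝ) ^ 2)⁻¹ ≤ f k - f (k + 1) := by
    have hdiff : f k - f (k + 1) = ((N + k + 1 : ℝ) * (N + k + 2))⁻¹ := by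
      simp only [f]
      push_cast
      field_simp
      ring
    rw [hdiff]
    exact inv_anti₀ (by positivity) (by nlinarith)
  calc ∑' k : ℕ, ENNReal.ofReal ((N + k + 2 : ℝ) ^ 2)⁻¹
      ≤ ∑' k : ℕ, ENNReal.ofReal (f k - f (k + 1)) :=
        ENNReal.tsum_le_tsum fun k ↦ ENNReal.ofReal_le_ofReal (hle k)
    _ = ENNReal.ofReal (N + 1 : ℝ)⁻¹ := by
        rw [← ENNReal.ofReal_tsum_of_nonneg (fun k ↦ sub_nonneg.2 (hf k.le_succ)) h.summable,
          h.tsum_eq]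
        simp [f]

theorem tsum_sum_range_eq (f : ℕ → ℕ → ℝ≥0∞) :
    ∑' n, ∑ j ∈ range n, f j n = ∑' (j : ℕ) (l : ℕ), f j (j + l + 1) := by
  have hfin (n : ℕ) : ∑ j ∈ range n, f j n = ∑' j, if j < n then f j n else 0 := by
    rw [tsum_eq_sum (s := range n) (fun j hj ↦ if_neg (by simpa using hj))]
    exact sum_congr rfl fun j hj ↦ (if_pos (mem_range.1 hj)).symm
  have hshift (j : ℕ) : ∑' n, (if j < n then f j n else 0) = ∑' l, f j (j + l + 1) := by
    set g : ℕ → ℝ≥0∞ := fun n ↦ if j < n then f j n else 0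
    have h := (ENNReal.summable (f := fun l ↦ g (l + (j + 1)))).sum_add_tsum_nat_add'
    rw [← h, sum_eq_zero fun i hi ↦ if_neg (by simp at hi; omega), zero_add]
    exact tsum_congr fun l ↦ by simp only [g, if_pos (by omega : j < l + (j + 1))]; ring_nf
  simp_rw [hfin]
  rw [ENNReal.tsum_comm]
  exact tsum_congr hshift

end ENNReal

/-- `mzv₁ s = ζ(s)`, `mzv₂ s t = ζ(s, t)` and `mzv₃ s t u = ζ(s, t, u)`, the largest summation
variable carrying the last exponent; the variables `0 < a < b < c` are `m + 1`, `m + n + 2` and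
`m + n + k + 3`. -/
noncomputable def mzv₁ (s : ℕ) : ℝ≥0∞ := ∑' m : ℕ, ENNReal.ofReal ((m + 1 : ℝ) ^ s)⁻¹

noncomputable def mzv₂ (s t : ℕ) : ℝ≥0∞ :=
  ∑' (m : ℕ) (n : ℕ), ENNReal.ofReal (((m + 1 : ℝ) ^ s * (m + n + 2) ^ t)⁻¹)

noncomputable def mzv₃ (s t u : ℕ) : ℝ≥0∞ :=
  ∑' (m : ℕ) (n : ℕ) (k : ℕ),
    ENNReal.ofReal (((m + 1 : ℝ) ^ s * (m + n + 2) ^ t * (m + n + k + 3) ^ u)⁻¹)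

noncomputable def mordellTornheim₂ (s t u : ℕ) : ℝ≥0∞ :=
  ∑' (m : ℕ) (n : ℕ), ENNReal.ofReal (((m + 1 : ℝ) ^ s * (n + 1) ^ t * (m + n + 2) ^ u)⁻¹)

noncomputable def mordellTornheim₃ (s t u v : ℕ) : ℝ≥0∞ :=
  ∑' (m : ℕ) (n : ℕ) (k : ℕ),
    ENNReal.ofReal (((m + 1 : ℝ) ^ s * (n + 1) ^ t * (k + 1) ^ u * (m + n + k + 3) ^ v)⁻¹)

/-- `∑_{0 < a < c} H_c / (a c²)`, with `j + 1` running over `1, …, c`. -/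
noncomputable def harmonicMzv₂ : ℝ≥0∞ :=
  ∑' (m : ℕ) (n : ℕ), ∑ j ∈ range (m + n + 2),
    ENNReal.ofReal (((m + 1 : ℝ) * (m + n + 2) ^ 2 * (j + 1))⁻¹)

theorem mzv₁_ne_top {s : ℕ} (hs : 1 < s) : mzv₁ s ≠ ⊤ := by
  have h := (summable_nat_add_iff 1).2 (Real.summable_nat_pow_inv.2 hs)
  push_cast at h
  exact h.tsum_ofReal_ne_top

theorem mzv₂_antitone (s : ℕ) : Antitone (mzv₂ s) := fun t t' ht ↦
  ENNReal.tsum_le_tsum fun m ↦ ENNReal.tsum_le_tsum fun n ↦ ENNReal.ofReal_le_ofReal <|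
    inv_anti₀ (by positivity) (by gcongr; linarith)

theorem mzv₂_one_two_ne_top : mzv₂ 1 2 ≠ ⊤ := by
  refine ne_top_of_le_ne_top (mzv₁_ne_top one_lt_two) (ENNReal.tsum_le_tsum fun m ↦ ?_)
  calc ∑' n : ℕ, ENNReal.ofReal (((m + 1 : ℝ) ^ 1 * (m + n + 2) ^ 2)⁻¹)
      = ENNReal.ofReal (m + 1 : ℝ)⁻¹ * ∑' n : ℕ, ENNReal.ofReal ((m + n + 2 : ℝ) ^ 2)⁻¹ := by
        rw [← ENNReal.tsum_mul_left]
        refine tsum_congr fun n ↦ ?_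
        rw [← ENNReal.ofReal_mul (by positivity), pow_one, mul_inv]
    _ ≤ ENNReal.ofReal (m + 1 : ℝ)⁻¹ * ENNReal.ofReal (m + 1 : ℝ)⁻¹ := by
        gcongr
        exact_mod_cast ENNReal.tsum_ofReal_inv_sq_le m
    _ = ENNReal.ofReal ((m + 1 : ℝ) ^ 2)⁻¹ := by
        rw [← ENNReal.ofReal_mul (by positivity), ← mul_inv, sq]

theorem mzv₃_one_one_two_le : mzv₃ 1 1 2 ≤ mzv₂ 1 2 := by
  refine ENNReal.tsum_le_tsum fun m ↦ ENNReal.tsum_le_tsum fun n ↦ ?_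
  calc ∑' k : ℕ, ENNReal.ofReal (((m + 1 : ℝ) ^ 1 * (m + n + 2) ^ 1 * (m + n + k + 3) ^ 2)⁻¹)
      = ENNReal.ofReal ((m + 1 : ℝ) * (m + n + 2))⁻¹ *
          ∑' k : ℕ, ENNReal.ofReal (((m + n + 1 : ℕ) + k + 2 : ℝ) ^ 2)⁻¹ := by
        rw [← ENNReal.tsum_mul_left]
        refine tsum_congr fun k ↦ ?_
        rw [← ENNReal.ofReal_mul (by positivity), ← mul_inv]
        push_cast
        ring_nf
    _ ≤ ENNReal.ofReal ((m + 1 : ℝ) * (m + n + 2))⁻¹ *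
          ENNReal.ofReal ((m + n + 1 : ℕ) + 1 : ℝ)⁻¹ := by
        gcongr
        exact ENNReal.tsum_ofReal_inv_sq_le _
    _ = ENNReal.ofReal (((m + 1 : ℝ) ^ 1 * (m + n + 2) ^ 2)⁻¹) := by
        rw [← ENNReal.ofReal_mul (by positivity), ← mul_inv]
        push_cast
        ring_nf

theorem mordellTornheim₂_one_one_two : mordellTornheim₂ 1 1 2 = mzv₂ 1 3 + mzv₂ 1 3 := by
  have hsplit (m n : ℕ) :
      ENNReal.ofReal (((m + 1 : ℝ) ^ 1 * (n + 1) ^ 1 * (m + n + 2) ^ 2)⁻¹) =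
        ENNReal.ofReal (((m + 1 : ℝ) ^ 1 * (m + n + 2) ^ 3)⁻¹) +
          ENNReal.ofReal (((n + 1 : ℝ) ^ 1 * (n + m + 2) ^ 3)⁻¹) := by
    rw [← ENNReal.ofReal_add (by positivity) (by positivity)]
    congr 1
    field_simp
    ring
  simp_rw [mordellTornheim₂, hsplit, ENNReal.tsum_add]
  rw [ENNReal.tsum_comm
    (f := fun m n : ℕ ↦ ENNReal.ofReal (((n + 1 : ℝ) ^ 1 * (n + m + 2) ^ 3)⁻¹))]
  rfl

theorem mordellTornheim₂_one_one_two_add_mzv₂_two_two :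
    mordellTornheim₂ 1 1 2 + mzv₂ 2 2 = mordellTornheim₂ 1 2 1 := by
  rw [mzv₂, ENNReal.tsum_comm, mordellTornheim₂, ← ENNReal.tsum_add]
  refine tsum_congr fun m ↦ ?_
  rw [← ENNReal.tsum_add]
  refine tsum_congr fun n ↦ ?_
  rw [← ENNReal.ofReal_add (by positivity) (by positivity)]
  congr 1
  field_simp
  ring

theorem mordellTornheim₂_one_two_one : mordellTornheim₂ 1 2 1 = mzv₂ 1 3 + mzv₁ 4 := by
  have hinner (n : ℕ) :
      ∑' m : ℕ, ENNReal.ofReal (((m + 1 : ℝ) ^ 1 * (n + 1) ^ 2 * (m + n + 2) ^ 1)⁻¹) =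
        ∑ j ∈ range (n + 1), ENNReal.ofReal (((n + 1 : ℝ) ^ 3 * (j + 1))⁻¹) := by
    convert ENNReal.tsum_ofReal_inv_mul_telescope (c := (n + 1 : ℝ) ^ 2) (by positivity) n
      using 3 <;> ring_nf
  rw [mordellTornheim₂, ENNReal.tsum_comm]
  simp_rw [hinner, sum_range_succ, ENNReal.tsum_add, ENNReal.tsum_sum_range_eq]
  simp only [mzv₂, mzv₁]
  push_cast
  ring_nf

theorem mzv₂_two_two_add_mzv₂_one_three : mzv₂ 2 2 + mzv₂ 1 3 = mzv₁ 4 := by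
  have hfin : mzv₂ 1 3 ≠ ⊤ :=
    ne_top_of_le_ne_top mzv₂_one_two_ne_top (mzv₂_antitone 1 (by norm_num))
  have h := mordellTornheim₂_one_one_two_add_mzv₂_two_two
  rw [mordellTornheim₂_one_one_two, mordellTornheim₂_one_two_one, add_assoc,
    ENNReal.add_right_inj hfin] at h
  rwa [add_comm]

theorem mordellTornheim₃_one_one_one_one :
    mordellTornheim₃ 1 1 1 1 =
      mordellTornheim₃ 1 1 0 2 + mordellTornheim₃ 1 1 0 2 + mordellTornheim₃ 1 1 0 2 := by
  set F : ℕ → ℕ → ℕ → ℝ≥0∞ := fun m n k ↦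
    ENNReal.ofReal (((m + 1 : ℝ) ^ 1 * (n + 1) ^ 1 * (k + 1) ^ 0 * (m + n + k + 3) ^ 2)⁻¹)
  have hsplit (m n k : ℕ) :
      ENNReal.ofReal (((m + 1 : ℝ) ^ 1 * (n + 1) ^ 1 * (k + 1) ^ 1 * (m + n + k + 3) ^ 1)⁻¹) =
        F m n k + F m k n + F n k m := by
    simp only [F]
    rw [← ENNReal.ofReal_add (by positivity) (by positivity),
      ← ENNReal.ofReal_add (by positivity) (by positivity)]
    congr 1
    field_simp
    ring
  have h₂ : ∑' (m : ℕ) (n : ℕ) (k : ℕ), F m k n = mordellTornheim₃ 1 1 0 2 :=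
    tsum_congr fun m ↦ ENNReal.tsum_comm
  have h₃ : ∑' (m : ℕ) (n : ℕ) (k : ℕ), F n k m = mordellTornheim₃ 1 1 0 2 := by
    rw [ENNReal.tsum_comm]
    exact tsum_congr fun n ↦ ENNReal.tsum_comm
  rw [mordellTornheim₃]
  simp_rw [hsplit, ENNReal.tsum_add]
  rw [h₂, h₃]
  rfl

theorem mordellTornheim₃_one_one_zero_two :
    mordellTornheim₃ 1 1 0 2 = mzv₃ 1 1 2 + mzv₃ 1 1 2 := by
  have hsplit (m n k : ℕ) :
      ENNReal.ofReal (((m + 1 : ℝ) ^ 1 * (n + 1) ^ 1 * (k + 1) ^ 0 * (m + n + k + 3) ^ 2)⁻¹) =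
        ENNReal.ofReal (((m + 1 : ℝ) ^ 1 * (m + n + 2) ^ 1 * (m + n + k + 3) ^ 2)⁻¹) +
          ENNReal.ofReal (((n + 1 : ℝ) ^ 1 * (n + m + 2) ^ 1 * (n + m + k + 3) ^ 2)⁻¹) := by
    rw [← ENNReal.ofReal_add (by positivity) (by positivity)]
    congr 1
    field_simp
    ring
  simp_rw [mordellTornheim₃, hsplit, ENNReal.tsum_add]
  rw [ENNReal.tsum_comm (f := fun m n : ℕ ↦ ∑' k : ℕ,
    ENNReal.ofReal (((n + 1 : ℝ) ^ 1 * (n + m + 2) ^ 1 * (n + m + k + 3) ^ 2)⁻¹))]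
  rfl

theorem mordellTornheim₃_one_one_one_one_eq_harmonicMzv₂ :
    mordellTornheim₃ 1 1 1 1 = harmonicMzv₂ + harmonicMzv₂ := by
  have hinner (m n : ℕ) : ∑' k : ℕ,
      ENNReal.ofReal (((m + 1 : ℝ) ^ 1 * (n + 1) ^ 1 * (k + 1) ^ 1 * (m + n + k + 3) ^ 1)⁻¹) =
        ∑ j ∈ range (m + n + 2), ENNReal.ofReal (((m + 1 : ℝ) * (m + n + 2) ^ 2 * (j + 1))⁻¹) +
          ∑ j ∈ range (n + m + 2),
            ENNReal.ofReal (((n + 1 : ℝ) * (n + m + 2) ^ 2 * (j + 1))⁻¹) := by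
    have h := ENNReal.tsum_ofReal_inv_mul_telescope (c := (m + 1 : ℝ) * (n + 1)) (by positivity)
      (m + n + 1)
    push_cast at h
    convert h using 1
    · congr! 2 with k
      ring_nf
    · rw [add_comm n m, ← sum_add_distrib]
      refine sum_congr rfl fun j _ ↦ ?_
      rw [← ENNReal.ofReal_add (by positivity) (by positivity)]
      congr 1
      field_simp
      ring
  simp_rw [mordellTornheim₃, hinner, ENNReal.tsum_add]
  rw [ENNReal.tsum_comm (f := fun m n : ℕ ↦ ∑ j ∈ range (n + m + 2),
    ENNReal.ofReal (((n + 1 : ℝ) * (n + m + 2) ^ 2 * (j + 1))⁻¹))]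
  rfl

theorem harmonicMzv₂_eq :
    harmonicMzv₂ = mzv₃ 1 1 2 + mzv₂ 2 2 + mzv₃ 1 1 2 + mzv₂ 1 3 := by
  set g : ℕ → ℕ → ℕ → ℝ≥0∞ := fun m n j ↦
    ENNReal.ofReal (((m + 1 : ℝ) * (m + n + 2) ^ 2 * (j + 1))⁻¹)
  have hsplit (m n : ℕ) : ∑ j ∈ range (m + n + 2), g m n j =
      ∑ j ∈ range m, g m n j + g m n m + ∑ i ∈ range n, g m n (m + 1 + i) +
        g m n (m + 1 + n) := by
    rw [show m + n + 2 = m + 1 + n + 1 by ring, sum_range_succ, sum_range_add, sum_range_succ]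
  have hbelow : ∑' (m : ℕ) (n : ℕ), ∑ j ∈ range m, g m n j = mzv₃ 1 1 2 := by
    simp_rw [Summable.tsum_finsetSum fun _ _ ↦ ENNReal.summable]
    rw [ENNReal.tsum_sum_range_eq]
    refine tsum_congr fun j ↦ tsum_congr fun l ↦ tsum_congr fun n ↦ ?_
    simp only [g]
    push_cast
    ring_nf
  have hdiag : ∑' (m : ℕ) (n : ℕ), g m n m = mzv₂ 2 2 :=
    tsum_congr fun m ↦ tsum_congr fun n ↦ by simp only [g]; ring_nf
  have habove : ∑' (m : ℕ) (n : ℕ), ∑ i ∈ range n, g m n (m + 1 + i) = mzv₃ 1 1 2 := by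
    refine tsum_congr fun m ↦ ?_
    rw [ENNReal.tsum_sum_range_eq]
    refine tsum_congr fun i ↦ tsum_congr fun l ↦ ?_
    simp only [g]
    push_cast
    ring_nf
  have htop : ∑' (m : ℕ) (n : ℕ), g m n (m + 1 + n) = mzv₂ 1 3 :=
    tsum_congr fun m ↦ tsum_congr fun n ↦ by simp only [g]; push_cast; ring_nf
  show ∑' (m : ℕ) (n : ℕ), ∑ j ∈ range (m + n + 2), g m n j = _
  simp_rw [hsplit, ENNReal.tsum_add]
  rw [hbelow, hdiag, habove, htop]

theorem mzv₃_one_one_two_eq_mzv₁_four : mzv₃ 1 1 2 = mzv₁ 4 := by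
  set x := mzv₃ 1 1 2
  have hx : x ≠ ⊤ := ne_top_of_le_ne_top mzv₂_one_two_ne_top mzv₃_one_one_two_le
  have h := mordellTornheim₃_one_one_one_one.symm.trans
    mordellTornheim₃_one_one_one_one_eq_harmonicMzv₂
  rw [mordellTornheim₃_one_one_zero_two, harmonicMzv₂_eq] at h
  have key : 4 * x + 2 * x = 4 * x + 2 * mzv₁ 4 :=
    calc 4 * x + 2 * x = x + x + (x + x) + (x + x) := by ring
      _ = x + mzv₂ 2 2 + x + mzv₂ 1 3 + (x + mzv₂ 2 2 + x + mzv₂ 1 3) := h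
      _ = 4 * x + 2 * (mzv₂ 2 2 + mzv₂ 1 3) := by ring
      _ = 4 * x + 2 * mzv₁ 4 := by rw [mzv₂_two_two_add_mzv₂_one_three]
  rwa [ENNReal.add_right_inj (mul_ne_top ofNat_ne_top hx),
    ENNReal.mul_right_inj two_ne_zero ofNat_ne_top] at key

def weakChainEquiv : ℕ × ℕ × ℕ ≃
    {p : ℕ × ℕ × ℕ // 0 < p.1 ∧ 0 < p.2.1 ∧ 0 < p.2.2 ∧ p.1 ≤ p.2.1 ∧ p.2.1 ≤ p.2.2} where
  toFun x := ⟨(x.1 + 1, x.1 + x.2.1 + 1, x.1 + x.2.1 + x.2.2 + 1), by dsimp only; omega⟩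
  invFun p := (p.1.1 - 1, p.1.2.1 - p.1.1, p.1.2.2 - p.1.2.1)
  left_inv x := by ext <;> simp
  right_inv := by
    rintro ⟨⟨a, b, c⟩, h⟩
    dsimp only at h
    ext <;> simp <;> omega

def skewTableauEquiv : (ℕ × ℕ × ℕ) ⊕ (ℕ × ℕ × ℕ) ≃
    {p : ℕ × ℕ × ℕ // 0 < p.1 ∧ 0 < p.2.1 ∧ 0 < p.2.2 ∧ p.1 < p.2.2 ∧ p.2.1 ≤ p.2.2} where
  toFun := Sum.elim
    (fun x ↦ ⟨(x.1 + 1, x.1 + x.2.1 + 2, x.1 + x.2.1 + x.2.2 + 2), by dsimp only; omega⟩)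
    (fun x ↦ ⟨(x.1 + x.2.1 + 1, x.1 + 1, x.1 + x.2.1 + x.2.2 + 2), by dsimp only; omega⟩)
  invFun p := if p.1.1 < p.1.2.1
    then .inl (p.1.1 - 1, p.1.2.1 - p.1.1 - 1, p.1.2.2 - p.1.2.1)
    else .inr (p.1.2.1 - 1, p.1.1 - p.1.2.1, p.1.2.2 - p.1.1 - 1)
  left_inv := by
    rintro (⟨m, n, k⟩ | ⟨m, n, k⟩) <;> simp <;> omega
  right_inv := by
    rintro ⟨⟨a, b, c⟩, h⟩
    dsimp only at h ⊢
    split_ifs <;> ext <;> simp <;> omega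

theorem tsum_weakChain_eq :
    ∑' p : {p : ℕ × ℕ × ℕ // 0 < p.1 ∧ 0 < p.2.1 ∧ 0 < p.2.2 ∧ p.1 ≤ p.2.1 ∧ p.2.1 ≤ p.2.2},
      ENNReal.ofReal ((p.1.1 : ℝ) * p.1.2.1 * p.1.2.2 ^ 2)⁻¹ =
        mzv₁ 4 + mzv₂ 2 2 + mzv₂ 1 3 + mzv₃ 1 1 2 := by
  rw [← weakChainEquiv.tsum_eq]
  simp_rw [ENNReal.tsum_prod']
  simp only [weakChainEquiv, Equiv.coe_fn_mk, Nat.cast_add, Nat.cast_one]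
  conv_lhs =>
    enter [1, m]
    rw [tsum_eq_zero_add' ENNReal.summable, tsum_eq_zero_add' ENNReal.summable]
  conv_lhs => enter [1, m, 2, 1, n]; rw [tsum_eq_zero_add' ENNReal.summable]
  simp_rw [ENNReal.tsum_add]
  simp only [mzv₁, mzv₂, mzv₃]
  push_cast
  ring_nf

theorem tsum_skewTableau_eq :
    ∑' p : {p : ℕ × ℕ × ℕ // 0 < p.1 ∧ 0 < p.2.1 ∧ 0 < p.2.2 ∧ p.1 < p.2.2 ∧ p.2.1 ≤ p.2.2},
      ENNReal.ofReal ((p.1.1 : ℝ) * p.1.2.1 * p.1.2.2 ^ 2)⁻¹ =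
        mzv₂ 1 3 + mzv₃ 1 1 2 + (mzv₂ 2 2 + mzv₃ 1 1 2) := by
  rw [← skewTableauEquiv.tsum_eq, Summable.tsum_sum ENNReal.summable ENNReal.summable]
  simp_rw [ENNReal.tsum_prod']
  simp only [skewTableauEquiv, Equiv.coe_fn_mk, Sum.elim_inl, Sum.elim_inr, Nat.cast_add,
    Nat.cast_one, Nat.cast_ofNat]
  conv_lhs => enter [1, 1, m, 1, n]; rw [tsum_eq_zero_add' ENNReal.summable]
  conv_lhs => enter [2, 1, m]; rw [tsum_eq_zero_add' ENNReal.summable]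
  simp_rw [ENNReal.tsum_add]
  simp only [mzv₂, mzv₃]
  push_cast
  ring_nf

/-- No summability is needed: a divergent real series and `(⊤ : ℝ≥0∞).toReal` are both `0`. -/
theorem tsum_eq_toReal_tsum_ofReal {ι : Type*} {f : ι → ℝ} (hf : ∀ i, 0 ≤ f i) :
    ∑' i, f i = (∑' i, ENNReal.ofReal (f i)).toReal := by
  rw [ENNReal.tsum_toReal_eq fun _ ↦ ENNReal.ofReal_ne_top]
  exact tsum_congr fun i ↦ (ENNReal.toReal_ofReal (hf i)).symm

/-- `ζ*(1,1,2) = Σ_{a≤b≤c} 1/(a b c²)` equals the Schur multiple zeta value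
`Σ_{a<c, b≤c} 1/(a b c²)` (duality `ζ(2↓1↓1) = ζ(1↑2↓1)`). -/
theorem schur_duality_example_1 :
    (∑' p : {p : ℕ × ℕ × ℕ //
        0 < p.1 ∧ 0 < p.2.1 ∧ 0 < p.2.2 ∧ p.1 ≤ p.2.1 ∧ p.2.1 ≤ p.2.2},
        ((p.1.1 : ℝ) * (p.1.2.1 : ℝ) * (p.1.2.2 : ℝ) ^ 2)⁻¹)
      = ∑' p : {p : ℕ × ℕ × ℕ //
          0 < p.1 ∧ 0 < p.2.1 ∧ 0 < p.2.2 ∧ p.1 < p.2.2 ∧ p.2.1 ≤ p.2.2},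
          ((p.1.1 : ℝ) * (p.1.2.1 : ℝ) * (p.1.2.2 : ℝ) ^ 2)⁻¹ := by
  rw [tsum_eq_toReal_tsum_ofReal fun _ ↦ by positivity,
    tsum_eq_toReal_tsum_ofReal fun _ ↦ by positivity, tsum_weakChain_eq, tsum_skewTableau_eq,
    mzv₃_one_one_two_eq_mzv₁_four]
  congr 1
  ring
end

section
/- Let (X, ≤, δ) be a finite admissible 2-labeled poset. Let X′ = (X, ≤′, δ′) be the 2-labeled poset with the opposite order (p ≤′ q iff q ≤ p) and with labels swapped (δ′(p) = ∘ if δ(p) = •, and δ′(p) = • if δ(p) = ∘). Then X′ is again admissible and I(X) = I(X′). -/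
/-- The two labels `∘` and `•`. -/
inductive Lab : Type
  | circ | bullet
  deriving DecidableEq, Inhabited

/-- `ω_∘(t) = 1/t` and `ω_•(t) = 1/(1-t)` (the densities of the 1-forms `dt/t`, `dt/(1-t)`). -/
noncomputable def omegaFn : Lab → ℝ → ℝ
  | .circ => fun t => t⁻¹
  | .bullet => fun t => (1 - t)⁻¹

/-- Switching the two labels `∘ ↔ •`. -/
def Lab.flip : Lab → Lab
  | .circ => .bullet
  | .bullet => .circ

/-- The Yamamoto integral of a finite 2-labeled poset, for an arbitrary (strict-order)
relation `lt` on a finite index type: the integral of `∏_p ω_{δ(p)}(t_p)` over the tuples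
`(t_p) ∈ (0,1)^X` with `t_p < t_q` whenever `lt p q`. -/
noncomputable def yamI (ι : Type*) [Fintype ι] (lt : ι → ι → Prop) (δ : ι → Lab) : ℝ :=
  ∫ t : ι → ℝ in
    {t : ι → ℝ | (∀ p, t p ∈ Set.Ioo (0 : ℝ) 1) ∧ ∀ p q, lt p q → t p < t q},
    ∏ p, omegaFn (δ p) (t p)

/-! The coordinatewise reflection `t ↦ 1 - t` preserves Lebesgue measure, maps the region of
the opposite order onto the region of the original one, and interchanges `dt/t` with
`dt/(1-t)`. -/

open MeasureTheory Set

@[simp]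
lemma Lab.flip_eq_circ {l : Lab} : l.flip = .circ ↔ l = .bullet := by
  cases l <;> simp [Lab.flip]

@[simp]
lemma Lab.flip_eq_bullet {l : Lab} : l.flip = .bullet ↔ l = .circ := by
  cases l <;> simp [Lab.flip]

lemma omegaFn_flip_one_sub (l : Lab) (t : ℝ) : omegaFn l.flip (1 - t) = omegaFn l t := by
  cases l <;> simp [omegaFn, Lab.flip]

section Reflection

variable {ι : Type*}

lemma measurePreserving_one_sub [Fintype ι] :
    MeasurePreserving (fun t : ι → ℝ => 1 - t) :=
  Measure.measurePreserving_sub_left volume 1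

lemma preimage_one_sub_yamI_domain (lt : ι → ι → Prop) :
    (fun t : ι → ℝ => 1 - t) ⁻¹' {t | (∀ p, t p ∈ Ioo (0 : ℝ) 1) ∧ ∀ p q, lt q p → t p < t q} =
      {t | (∀ p, t p ∈ Ioo (0 : ℝ) 1) ∧ ∀ p q, lt p q → t p < t q} := by
  ext t
  simp only [mem_preimage, mem_ofPred_eq, Pi.sub_apply, Pi.one_apply, mem_Ioo, sub_pos,
    sub_lt_self_iff, sub_lt_sub_iff_left]
  exact and_congr (forall_congr' fun p => and_comm)
    ⟨fun h p q hpq => h q p hpq, fun h p q hpq => h q p hpq⟩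

theorem yamI_flip [Fintype ι] (lt : ι → ι → Prop) (δ : ι → Lab) :
    yamI ι (fun p q => lt q p) (fun p => (δ p).flip) = yamI ι lt δ := by
  unfold yamI
  rw [← measurePreserving_one_sub.setIntegral_preimage_emb (measurableEmbedding_subLeft 1),
    preimage_one_sub_yamI_domain]
  simp only [Pi.sub_apply, Pi.one_apply, omegaFn_flip_one_sub]

end Reflection

/-- **Duality for Yamamoto integrals.** If `(X,≤,δ)` is a finite admissible 2-labeled
poset (`δ p = ∘` for maximal `p`, `δ p = •` for minimal `p`), then the 2-labeled poset
`X'` with the opposite order and swapped labels is again admissible, and `I(X) = I(X')`. -/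
theorem yamI_dual (ι : Type*) [Fintype ι] [PartialOrder ι] (δ : ι → Lab)
    (hmax : ∀ p : ι, (∀ q, ¬p < q) → δ p = Lab.circ)
    (hmin : ∀ p : ι, (∀ q, ¬q < p) → δ p = Lab.bullet) :
    ((∀ p : ι, (∀ q, ¬q < p) → Lab.flip (δ p) = Lab.circ) ∧
      (∀ p : ι, (∀ q, ¬p < q) → Lab.flip (δ p) = Lab.bullet)) ∧
    yamI ι (fun p q => p < q) δ = yamI ι (fun p q => q < p) fun p => Lab.flip (δ p) := by
  refine ⟨⟨fun p hp => Lab.flip_eq_circ.2 (hmin p hp),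
    fun p hp => Lab.flip_eq_bullet.2 (hmax p hp)⟩, ?_⟩
  exact (yamI_flip _ δ).symm
end
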